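/- Let a₁,…,a_k be pairwise distinct letters of an alphabet A with k ≥ 3. Then the purely periodic infinite word (Pal(a₁·a₂⋯a_k))^ω (whose period is the generalized Fraenkel word Fr_k = Pal(a₁⋯a_k), which satisfies Fr_k = Fr_{k−1}·a_k·Fr_{k−1}) is balanced. -/

import Mathlib

/-- The palindromic right closure `w⁽⁺⁾`: the shortest palindrome having `w` as a prefix. -/
def palClosure {A : Type*} [DecidableEq A] (w : List A) : List A :=
  w ++ (w.take (Nat.find (⟨w.length, by simp⟩ :
    ∃ i, (w.drop i).reverse = w.drop i))).reverse

/-- Iterated palindromic closure: `Pal ε = ε`, `Pal (w·x) = (Pal w · x)⁽⁺⁾`. -/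
def Pal {A : Type*} [DecidableEq A] (w : List A) : List A :=
  w.foldl (fun p x => palClosure (p ++ [x])) []

/-- `u` is a factor of the infinite word `s`. -/
def IsFactorOf {A : Type*} (u : List A) (s : ℕ → A) : Prop :=
  ∃ i : ℕ, u = (List.range u.length).map (fun j => s (i + j))

/-- `s` is balanced. -/
def IsBalanced {A : Type*} [DecidableEq A] (s : ℕ → A) : Prop :=
  ∀ u v : List A, IsFactorOf u s → IsFactorOf v s → u.length = v.length →
    ∀ a : A, u.count a ≤ v.count a + 1

/-- `u` is a prefix of the infinite word `s`. -/
def IsPrefixOf {A : Type*} (u : List A) (s : ℕ → A) : Prop :=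
  u = (List.range u.length).map s

/-- `s` is a standard episturmian sequence with directive sequence `Δ`. -/
def IsStdEpisturmian {A : Type*} [DecidableEq A] (s Δ : ℕ → A) : Prop :=
  ∀ n : ℕ, IsPrefixOf (Pal ((List.range n).map Δ)) s

/-- Concatenation of a finite word and an infinite word. -/
def wcat {A : Type*} (u : List A) (s : ℕ → A) : ℕ → A :=
  fun n => if h : n < u.length then u.get ⟨n, h⟩ else s (n - u.length)

/-- The constant infinite word `c^ω`. -/
def constW {A : Type*} (c : A) : ℕ → A := fun _ => c

/-- The purely periodic infinite word `w^ω` (`d` is a default letter, irrelevant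
when `w` is nonempty). -/
def perW {A : Type*} (w : List A) (d : A) : ℕ → A :=
  fun n => w.getD (n % w.length) d

/-- At least three distinct letters occur in `s`. -/
def ThreeLetters {A : Type*} (s : ℕ → A) : Prop :=
  ∃ a b c : A, a ≠ b ∧ a ≠ c ∧ b ≠ c ∧
    a ∈ Set.range s ∧ b ∈ Set.range s ∧ c ∈ Set.range s

/-- Fraenkel words -/
def Fr {A : Type*} (a : ℕ → A) : ℕ → List A
  | 0 => []
  | n+1 => Fr a n ++ a n :: Fr a n

lemma Pal_append_singleton {A : Type*} [DecidableEq A] (w : List A) (x : A) :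
    Pal (w ++ [x]) = palClosure (Pal w ++ [x]) := by
  simp [Pal, List.foldl_append]

lemma palClosure_of_notMem {A : Type*} [DecidableEq A] (p : List A) (x : A)
    (hp : p.reverse = p) (hx : x ∉ p) :
    palClosure (p ++ [x]) = p ++ x :: p := by
  have hfind : Nat.find (⟨(p ++ [x]).length, by simp⟩ :
      ∃ i, ((p ++ [x]).drop i).reverse = (p ++ [x]).drop i) = p.length := by
    rw [Nat.find_eq_iff]
    constructor
    · simp [List.drop_left]
    · intro j hj hpal
      have hdrop : (p ++ [x]).drop j = p.drop j ++ [x] := by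
        rw [List.drop_append_of_le_length (le_of_lt hj)]
      rw [hdrop, List.reverse_append] at hpal
      rcases hd : p.drop j with _ | ⟨y, t⟩
      · have := congrArg List.length hd; simp at this; omega
      · rw [hd] at hpal
        simp at hpal
        exact hx (hpal.1 ▸ List.drop_subset j p (hd ▸ (List.mem_cons_self : y ∈ y :: t)))
  show (p ++ [x]) ++ _ = _
  rw [hfind, List.take_left, hp]
  simp

lemma Fr_reverse {A : Type*} (a : ℕ → A) (n : ℕ) : (Fr a n).reverse = Fr a n := by
  induction n with
  | zero => rfl
  | succ n ih =>
    show (Fr a n ++ a n :: Fr a n).reverse = _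
    rw [show a n :: Fr a n = [a n] ++ Fr a n from rfl]
    simp only [List.reverse_append, List.reverse_cons, List.reverse_singleton, ih]
    simp [Fr]

lemma mem_Fr {A : Type*} {a : ℕ → A} {n : ℕ} {x : A} (h : x ∈ Fr a n) :
    ∃ j < n, x = a j := by
  induction n with
  | zero => simp [Fr] at h
  | succ n ih =>
    rw [Fr, List.mem_append, List.mem_cons] at h
    rcases h with h | h | h
    · obtain ⟨j, hj, hx⟩ := ih h; exact ⟨j, by omega, hx⟩
    · exact ⟨n, by omega, h⟩
    · obtain ⟨j, hj, hx⟩ := ih h; exact ⟨j, by omega, hx⟩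

lemma length_Fr {A : Type*} (a : ℕ → A) (n : ℕ) : (Fr a n).length = 2^n - 1 := by
  induction n with
  | zero => rfl
  | succ n ih =>
    show (Fr a n ++ a n :: Fr a n).length = _
    have : 1 ≤ 2^n := Nat.one_le_two_pow
    simp [ih]
    omega

lemma Pal_eq_Fr {A : Type*} [DecidableEq A] (a : ℕ → A) (k : ℕ)
    (hinj : Set.InjOn a (Set.Iio k)) (n : ℕ) (hn : n ≤ k) :
    Pal ((List.range n).map a) = Fr a n := by
  induction n with
  | zero => rfl
  | succ n ih =>
    rw [List.range_succ, List.map_append, List.map_singleton, Pal_append_singleton,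
      ih (by omega), palClosure_of_notMem _ _ (Fr_reverse a n)]
    · rfl
    · intro hmem
      obtain ⟨j, hj, hx⟩ := mem_Fr hmem
      have : j = n := hinj (by simp; omega) (by simp; omega) hx.symm
      omega

lemma exists_class : ∀ (k t : ℕ), 1 ≤ t → t < 2^k → ∃ i < k, t % 2^(i+1) = 2^i := by
  intro k
  induction k with
  | zero => intro t h1 h2; omega
  | succ k ih =>
    intro t h1 h2
    rcases Nat.even_or_odd t with he | ho
    · obtain ⟨t', rfl⟩ := he
      have h1' : 1 ≤ t' := by omega
      have h2' : t' < 2^k := by rw [pow_succ] at h2; omega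
      obtain ⟨i, hi, hmod⟩ := ih t' h1' h2'
      refine ⟨i+1, by omega, ?_⟩
      have : t' + t' = 2 * t' := by ring
      rw [this, pow_succ, mul_comm (2^(i+1)) 2, Nat.mul_mod_mul_left, hmod,
        pow_succ, mul_comm]
    · exact ⟨0, by omega, by rw [pow_one, pow_zero, Nat.odd_iff.mp ho]⟩

lemma class_unique {t i j : ℕ} (hi : t % 2^(i+1) = 2^i) (hj : t % 2^(j+1) = 2^j) :
    i = j := by
  by_contra hne
  wlog hlt : i < j generalizing i j
  · exact this hj hi (Ne.symm hne) (by omega)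
  have hdvd : (2:ℕ)^(i+1) ∣ 2^(j+1) := pow_dvd_pow 2 (by omega)
  have := Nat.mod_mod_of_dvd t hdvd
  rw [hj, hi] at this
  have h0 : (2:ℕ)^j % 2^(i+1) = 0 := Nat.mod_eq_zero_of_dvd (pow_dvd_pow 2 (by omega))
  have hpos : 0 < (2:ℕ)^i := Nat.pow_pos (by norm_num)
  omega

lemma getD_Fr {A : Type*} (a : ℕ → A) (d : A) :
    ∀ (k i m : ℕ), i < k → m < 2^k - 1 → (m+1) % 2^(i+1) = 2^i →
      (Fr a k).getD m d = a i := by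
  intro k
  induction k with
  | zero => intro i m hi; omega
  | succ k ih =>
    intro i m hi hm hmod
    have hlen : (Fr a k).length = 2^k - 1 := length_Fr a k
    have hpow : 1 ≤ 2^k := Nat.one_le_two_pow
    show (Fr a k ++ a k :: Fr a k).getD m d = a i
    rcases lt_trichotomy m (2^k - 1) with h | h | h
    · rw [List.getD_append _ _ _ _ (by omega)]
      rcases Nat.lt_or_ge i k with hik | hik
      · exact ih i m hik h hmod
      · exfalso
        have hik' : i = k := by omega
        subst hik'
        have : m + 1 < 2^(i+1) := by
          have : (2:ℕ)^i < 2^(i+1) := by rw [pow_succ]; omega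
          omega
        rw [Nat.mod_eq_of_lt this] at hmod
        omega
    · subst h
      rw [List.getD_append_right _ _ _ _ (by omega)]
      have : 2^k - 1 - (Fr a k).length = 0 := by omega
      rw [this]
      rcases Nat.lt_or_ge i k with hik | hik
      · exfalso
        have : (2:ℕ)^(i+1) ∣ 2^k := pow_dvd_pow 2 (by omega)
        have h2 : (2^k - 1 + 1) % 2^(i+1) = 0 := by
          have : 2^k - 1 + 1 = 2^k := by omega
          rw [this]; exact Nat.mod_eq_zero_of_dvd (pow_dvd_pow 2 (by omega))
        have : 0 < (2:ℕ)^i := Nat.pow_pos (by norm_num)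
        omega
      · have : i = k := by omega
        subst this; rfl
    · rw [List.getD_append_right _ _ _ _ (by omega)]
      set m' := m - (2^k - 1) - 1 with hm'
      have hmeq : m = 2^k + m' := by omega
      have h1 : m - (Fr a k).length = m' + 1 := by omega
      rw [h1]
      show (Fr a k).getD m' d = a i
      have hik : i < k := by
        by_contra hik
        have : i = k := by omega
        subst this
        have hlt : m + 1 < 2^(i+1) := by rw [pow_succ]; omega
        rw [Nat.mod_eq_of_lt hlt] at hmod
        omega
      apply ih i m' hik (by omega)
      have hdvd : (2:ℕ)^(i+1) ∣ 2^k := pow_dvd_pow 2 (by omega)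
      obtain ⟨c, hc⟩ := hdvd
      calc (m'+1) % 2^(i+1) = (2^k + (m'+1)) % 2^(i+1) := by
            rw [hc, add_comm (2^(i+1)*c), mul_comm]
            exact (Nat.add_mul_mod_self_right _ _ _).symm
        _ = (m+1) % 2^(i+1) := by rw [hmeq]; ring_nf
        _ = 2^i := hmod

lemma mod_eq_iff_dvd {g : ℕ} (hg : 0 < g) (t : ℕ) : t % (2*g) = g ↔ 2*g ∣ t + g := by
  constructor
  · intro h
    have h2 := Nat.div_add_mod t (2*g)
    exact ⟨t/(2*g) + 1, by rw [Nat.mul_add, Nat.mul_one]; omega⟩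
  · rintro ⟨c, hc⟩
    have h2 := Nat.div_add_mod t (2*g)
    have h3 := Nat.mod_lt t (show 0 < 2*g by omega)
    rcases c with _ | c
    · omega
    · have : (2*g) * (c+1) = 2*g*c + 2*g := by ring
      rw [this] at hc
      have h4 : t = 2*g*c + g := by omega
      rw [h4, Nat.mul_add_mod]
      exact Nat.mod_eq_of_lt (by omega)

section Counting

variable (L M g : ℕ)

/-- prefix count of the class -/
def cnt (n : ℕ) : ℕ := (List.range n).countP (fun m => decide ((m % L + 1) % M = g))

variable {L M g} {c r : ℕ}
variable (hM : M = 2*g) (hg : 1 ≤ g) (hcM : c * M = L + 1) (hr : r + 1 = c * g)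

lemma cnt_succ (n : ℕ) :
    cnt L M g (n+1) = cnt L M g n + if (n % L + 1) % M = g then 1 else 0 := by
  rw [cnt, List.range_succ, List.countP_append, cnt]
  simp [List.countP_cons]

include hM hg hcM hr

lemma hL1 : 1 ≤ L := by nlinarith

lemma hc1 : 1 ≤ c := by nlinarith

lemma hrL : r < L := by nlinarith

lemma cnt_base : ∀ n, n ≤ L → cnt L M g n = (n + g) / M := by
  intro n
  induction n with
  | zero =>
    intro _
    have : g < M := by omega
    simp [cnt, Nat.div_eq_of_lt this]
  | succ n ih =>
    intro hn
    have hnL : n < L := by omega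
    rw [cnt_succ, ih (by omega), Nat.mod_eq_of_lt hnL]
    have hdvd : ((n+1) % M = g) ↔ (M ∣ n + g + 1) := by
      have e : n + g + 1 = (n+1) + g := by omega
      rw [e, hM]
      exact mod_eq_iff_dvd hg (n+1)
    have e2 : n + 1 + g = n + g + 1 := by omega
    rw [e2, (Nat.succ_div : (n + g + 1) / M = _)]
    by_cases h : (n+1) % M = g
    · rw [if_pos h, if_pos (hdvd.mp h)]
    · rw [if_neg h, if_neg (fun hd => h (hdvd.mpr hd))]

/-- the divisor identity on `[0, L]` -/
lemma base_identity : ∀ n, n ≤ L → (n + g) / M = (c * n + r) / L := by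
  intro n hn
  have hM0 : 0 < M := by omega
  set q := (n+g)/M with hq
  have hdm : M * q + (n+g) % M = n + g := Nat.div_add_mod _ _
  have hlt : (n+g) % M < M := Nat.mod_lt _ hM0
  have h1 : M * q ≤ n + g := by omega
  have h2 : n + g < M * q + M := by omega
  have hqc : q ≤ c := by
    by_contra hcon
    have hcq : c + 1 ≤ q := by omega
    have h3 : M * (c+1) ≤ M * q := Nat.mul_le_mul_left M hcq
    have e : M * (c+1) = c * M + M := by ring
    omega
  have f1 : q * L + q ≤ c * n + r + 1 := by
    have h3 : c * (M * q) ≤ c * (n + g) := Nat.mul_le_mul_left c h1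
    have e1 : c * (M * q) = q * (c * M) := by ring
    have e2 : q * (c * M) = q * L + q := by rw [hcM]; ring
    have e3 : c * (n + g) = c * n + (r + 1) := by rw [hr]; ring
    omega
  have f2 : c * n + r + 1 + c ≤ q * L + L + q + 1 := by
    have h3 : c * (n + g + 1) ≤ c * (M * q + M) := Nat.mul_le_mul_left c (by omega)
    have e1 : c * (M * q + M) = q * (c * M) + c * M := by ring
    have e2 : q * (c * M) = q * L + q := by rw [hcM]; ring
    have e3 : c * (n + g + 1) = c * n + (r + 1) + c := by rw [hr]; ring
    omega
  have f3 : c * n ≤ c * L := Nat.mul_le_mul_left c hn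
  have hup : c * n + r < (q+1) * L := by
    rcases eq_or_lt_of_le hqc with hqe | hql
    · have e1 : (q+1)*L = c*L + L := by rw [hqe]; ring
      have := hrL hM hg hcM hr
      omega
    · have e1 : (q+1)*L = q*L + L := by ring
      omega
  have hlo : q * L ≤ c * n + r := by
    rcases Nat.eq_zero_or_pos q with h0 | h0
    · simp [h0]
    · omega
  exact (Nat.div_eq_of_lt_le hlo hup).symm

lemma cnt_L : cnt L M g L = c := by
  rw [cnt_base hM hg hcM hr L le_rfl]
  have e : (c+1)*M = c*M + M := by ring
  exact Nat.div_eq_of_lt_le (by omega) (by omega)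

lemma cnt_add_L (n : ℕ) : cnt L M g (n + L) = cnt L M g n + c := by
  induction n with
  | zero =>
    have : cnt L M g 0 = 0 := by simp [cnt]
    rw [Nat.zero_add, this, Nat.zero_add]
    exact cnt_L hM hg hcM hr
  | succ n ih =>
    have e : n + 1 + L = (n + L) + 1 := by omega
    have hL : 1 ≤ L := hL1 hM hg hcM hr
    rw [e, cnt_succ, ih, cnt_succ]
    rw [Nat.add_mod_right]
    ring

lemma cnt_formula : ∀ n, cnt L M g n = (c * n + r) / L := by
  have hL : 1 ≤ L := hL1 hM hg hcM hr
  intro n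
  induction n using Nat.strong_induction_on with
  | _ n ih =>
    rcases le_or_gt n L with h | h
    · rw [cnt_base hM hg hcM hr n h, base_identity hM hg hcM hr n h]
    · have e : n = (n - L) + L := by omega
      rw [e, cnt_add_L hM hg hcM hr, ih (n - L) (by omega)]
      have e2 : c * ((n - L) + L) + r = (c * (n - L) + r) + L * c := by ring
      rw [e2, Nat.add_mul_div_left _ _ (by omega : 0 < L)]
end Counting


/-- The periodic word `(Pal(a₁⋯a_k))^ω` (whose period is the generalized Fraenkel word
`Fr_k = Pal(a₁⋯a_k) = Fr_{k−1}·a_k·Fr_{k−1}`) is balanced, for pairwise distinct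
letters `a₁,…,a_k` (indexed from 0 here) with `k ≥ 3`. -/
theorem fraenkel_word_balanced {A : Type*} [DecidableEq A] (k : ℕ) (a : ℕ → A)
    (hk : 3 ≤ k) (hinj : Set.InjOn a (Set.Iio k)) :
    IsBalanced (perW (Pal ((List.range k).map a)) (a 0)) := by
  have hPal : Pal ((List.range k).map a) = Fr a k := Pal_eq_Fr a k hinj k le_rfl
  rw [hPal]
  set L : ℕ := 2^k - 1 with hL
  have hpk : 1 ≤ 2^k := Nat.one_le_two_pow
  have hLpos : 0 < L := by
    have h8 : (8:ℕ) ≤ 2^k := by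
      calc (8:ℕ) = 2^3 := rfl
        _ ≤ 2^k := Nat.pow_le_pow_right (by norm_num) hk
    omega
  have hlen : (Fr a k).length = L := length_Fr a k
  set s : ℕ → A := perW (Fr a k) (a 0) with hs
  have s_class : ∀ n : ℕ, ∃ i < k, ((n % L) + 1) % 2^(i+1) = 2^i ∧ s n = a i := by
    intro n
    have hmlt : n % L < L := Nat.mod_lt n hLpos
    obtain ⟨i, hik, hmod⟩ := exists_class k (n % L + 1) (by omega) (by omega)
    refine ⟨i, hik, hmod, ?_⟩
    show (Fr a k).getD (n % (Fr a k).length) (a 0) = a i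
    rw [hlen]
    exact getD_Fr a (a 0) k i (n % L) hik (by omega) hmod
  have s_eq_iff : ∀ (i : ℕ), i < k → ∀ n : ℕ,
      (s n = a i ↔ ((n % L) + 1) % 2^(i+1) = 2^i) := by
    intro i hik n
    obtain ⟨i', hik', hmod', hs'⟩ := s_class n
    constructor
    · intro h
      have : i' = i := hinj (Set.mem_Iio.mpr hik') (Set.mem_Iio.mpr hik) (by rw [← hs', h])
      rwa [← this]
    · intro h
      have hmlt : n % L < L := Nat.mod_lt n hLpos
      show (Fr a k).getD (n % (Fr a k).length) (a 0) = a i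
      rw [hlen]
      exact getD_Fr a (a 0) k i (n % L) hik (by omega) h
  intro u v hu hv hlen' b
  obtain ⟨p, hup⟩ := hu
  obtain ⟨q, hvq⟩ := hv
  rw [← hlen'] at hvq
  set ℓ := u.length with hl
  by_cases hb : ∃ i, i < k ∧ b = a i
  · obtain ⟨i, hik, rfl⟩ := hb
    set M : ℕ := 2^(i+1) with hM
    set g : ℕ := 2^i with hg
    set c : ℕ := 2^(k-1-i) with hc
    set r : ℕ := 2^(k-1) - 1 with hr
    have hMg : M = 2 * g := by rw [hM, hg, pow_succ, mul_comm]
    have hg1 : 1 ≤ g := Nat.one_le_two_pow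
    have hcM : c * M = L + 1 := by
      rw [hc, hM, ← pow_add, hL]
      have e : k - 1 - i + (i + 1) = k := by omega
      rw [e]; omega
    have hcg : r + 1 = c * g := by
      rw [hc, hg, ← pow_add, hr]
      have e : k - 1 - i + i = k - 1 := by omega
      rw [e]
      have : 1 ≤ 2^(k-1) := Nat.one_le_two_pow
      omega
    have wcount : ∀ w (pw : ℕ), w = (List.range ℓ).map (fun j => s (pw + j)) →
        w.count (a i) + (c * pw + r)/L = (c * (pw + ℓ) + r)/L := by
      intro w pw hw
      have h1 : w.count (a i)
          = (List.range ℓ).countP (fun j => decide (((pw + j) % L + 1) % M = g)) := by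
        rw [hw, List.count_eq_countP, List.countP_map]
        apply List.countP_congr
        intro x _
        simp only [Function.comp_apply, beq_iff_eq, decide_eq_true_eq]
        exact s_eq_iff i hik (pw + x)
      have h2 : cnt L M g (pw + ℓ) = cnt L M g pw +
          (List.range ℓ).countP (fun j => decide (((pw + j) % L + 1) % M = g)) := by
        rw [cnt, List.range_add, List.countP_append, List.countP_map, ← cnt]
        congr 1
      rw [h1, ← cnt_formula hMg hg1 hcM hcg, ← cnt_formula hMg hg1 hcM hcg, h2]
      omega
    have hu2 := wcount u p hup
    have hv2 := wcount v q hvq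
    have e1 : c * (p + ℓ) + r = (c * p + r) + c * ℓ := by ring
    have e2 : c * (q + ℓ) + r = (c * q + r) + c * ℓ := by ring
    rw [e1] at hu2
    rw [e2] at hv2
    have d1 : ((c*p+r) + c*ℓ)/L ≤ (c*p+r)/L + (c*ℓ)/L + 1 ∧
        (c*p+r)/L + (c*ℓ)/L ≤ ((c*p+r) + c*ℓ)/L := by
      rw [Nat.add_div hLpos]; split_ifs <;> omega
    have d2 : ((c*q+r) + c*ℓ)/L ≤ (c*q+r)/L + (c*ℓ)/L + 1 ∧
        (c*q+r)/L + (c*ℓ)/L ≤ ((c*q+r) + c*ℓ)/L := by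
      rw [Nat.add_div hLpos]; split_ifs <;> omega
    omega
  · have : u.count b = 0 := by
      rw [hup, List.count_eq_zero]
      intro hmem
      rw [List.mem_map] at hmem
      obtain ⟨j, _, hj⟩ := hmem
      obtain ⟨i', hik', _, hs'⟩ := s_class (p + j)
      exact hb ⟨i', hik', by rw [← hj, hs']⟩
    omega
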